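/- The averaged magic-state measurement equals the depolarizing channel with λ = 2/3: the map τ ↦ (1/4) Σ_{i=1}^{4} Σ_{s∈{+,−}} Tr[μ^s_i τ] · μ^s_i satisfies Φ(I) = I and Φ(P) = (1/3)P for P ∈ {X, Y, Z}, i.e., Φ = Δ_{2/3}. -/
import Mathlib


open Matrix

noncomputable def PX : Matrix (Fin 2) (Fin 2) ℂ := !![0, 1; 1, 0]
noncomputable def PY : Matrix (Fin 2) (Fin 2) ℂ := !![0, -Complex.I; Complex.I, 0]
noncomputable def PZ : Matrix (Fin 2) (Fin 2) ℂ := !![1, 0; 0, -1]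

noncomputable def sgn (b : Bool) : ℂ := if b then -1 else 1

noncomputable def mu0 (s : Bool) : Matrix (Fin 2) (Fin 2) ℂ :=
  ((1 : ℂ)/2) • (1 + (sgn s * ((1 : ℂ)/(Real.sqrt 3 : ℂ))) • (PX + PY + PZ))

noncomputable def mu (i : Fin 4) (s : Bool) : Matrix (Fin 2) (Fin 2) ℂ :=
  match i with
  | 0 => mu0 s
  | 1 => PX * mu0 s * PX
  | 2 => PY * mu0 s * PY
  | 3 => PZ * mu0 s * PZ

noncomputable def PhiMagic (τ : Matrix (Fin 2) (Fin 2) ℂ) : Matrix (Fin 2) (Fin 2) ℂ :=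
  ((1 : ℂ)/4) • ∑ i : Fin 4, ∑ s : Bool, (mu i s * τ).trace • mu i s

noncomputable def depol (lam : ℝ) (ρ : Matrix (Fin 2) (Fin 2) ℂ) : Matrix (Fin 2) (Fin 2) ℂ :=
  ((lam : ℂ) * ρ.trace * ((1 : ℂ)/2)) • 1 + ((1 : ℂ) - lam) • ρ

noncomputable def g (s : Bool) : ℂ := sgn s * ((1 : ℂ)/(Real.sqrt 3 : ℂ))

lemma mu0_eq (s : Bool) : mu0 s =
    !![(1 + g s)/2, g s * (1 - Complex.I)/2; g s * (1 + Complex.I)/2, (1 - g s)/2] := by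
  ext i j
  fin_cases i <;> fin_cases j <;>
    simp [mu0, g, PX, PY, PZ, Matrix.one_apply] <;> ring

lemma mu_eq_0 (s : Bool) : mu 0 s =
    !![(1 + g s)/2, g s * (1 - Complex.I)/2; g s * (1 + Complex.I)/2, (1 - g s)/2] := mu0_eq s

lemma mu_eq_1 (s : Bool) : mu 1 s =
    !![(1 - g s)/2, g s * (1 + Complex.I)/2; g s * (1 - Complex.I)/2, (1 + g s)/2] := by
  show PX * mu0 s * PX = _
  rw [mu0_eq]
  ext i j
  fin_cases i <;> fin_cases j <;>
    simp [PX, Matrix.mul_apply, Fin.sum_univ_succ]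

lemma I_cube : Complex.I ^ 3 = -Complex.I := by
  rw [pow_succ, Complex.I_sq]; ring

lemma mu_eq_2 (s : Bool) : mu 2 s =
    !![(1 - g s)/2, -(g s * (1 + Complex.I)/2); -(g s * (1 - Complex.I)/2), (1 + g s)/2] := by
  show PY * mu0 s * PY = _
  rw [mu0_eq]
  ext i j
  fin_cases i <;> fin_cases j <;>
    simp [PY, Matrix.mul_apply, Fin.sum_univ_succ] <;> ring_nf <;>
    simp only [Complex.I_sq, I_cube] <;> ring

lemma mu_eq_3 (s : Bool) : mu 3 s =
    !![(1 + g s)/2, -(g s * (1 - Complex.I)/2); -(g s * (1 + Complex.I)/2), (1 - g s)/2] := by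
  show PZ * mu0 s * PZ = _
  rw [mu0_eq]
  ext i j
  fin_cases i <;> fin_cases j <;>
    simp [PZ, Matrix.mul_apply, Fin.sum_univ_succ] <;> ring

lemma trace_mul_fin_two (A B : Matrix (Fin 2) (Fin 2) ℂ) :
    (A * B).trace = A 0 0 * B 0 0 + A 0 1 * B 1 0 + A 1 0 * B 0 1 + A 1 1 * B 1 1 := by
  simp [Matrix.trace_fin_two, Matrix.mul_apply, Fin.sum_univ_two]; ring

set_option maxHeartbeats 1600000 in
lemma key (τ : Matrix (Fin 2) (Fin 2) ℂ) : PhiMagic τ = depol (2/3) τ := by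
  have hg : ∀ s : Bool, (g s)^2 = 1/3 := by
    have h3 : ((Real.sqrt 3 : ℝ) : ℂ)^2 = 3 := by
      norm_cast; rw [Real.sq_sqrt] <;> norm_num
    have h0 : ((Real.sqrt 3 : ℝ) : ℂ) ≠ 0 := by
      intro h; rw [h] at h3; norm_num at h3
    intro s
    have : (g s)^2 = (sgn s)^2 * (1/ ((Real.sqrt 3 : ℝ) : ℂ))^2 := by rw [g]; ring
    rw [this]
    have hs : (sgn s)^2 = 1 := by cases s <;> simp [sgn]
    rw [hs]
    field_simp
    first
      | linear_combination h3
      | linear_combination (-2 : ℂ) * h3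
      | linear_combination (2 : ℂ) * h3
      | linear_combination (-1 : ℂ) * h3
  have ht := hg true
  have hf := hg false
  rw [PhiMagic, Fin.sum_univ_four]
  simp only [Fintype.sum_bool, mu_eq_0, mu_eq_1, mu_eq_2, mu_eq_3, trace_mul_fin_two]
  ext i j
  fin_cases i <;> fin_cases j <;>
    simp [depol, Matrix.trace_fin_two, Matrix.one_apply] <;>
    ring_nf <;>
    simp only [ht, hf, Complex.I_sq, I_cube] <;>
    ring

theorem magic_rounding_is_depolarizing :
    PhiMagic 1 = 1 ∧
    PhiMagic PX = ((1 : ℂ)/3) • PX ∧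
    PhiMagic PY = ((1 : ℂ)/3) • PY ∧
    PhiMagic PZ = ((1 : ℂ)/3) • PZ ∧
    (∀ τ : Matrix (Fin 2) (Fin 2) ℂ, PhiMagic τ = depol (2/3) τ) := by
  refine ⟨?_, ?_, ?_, ?_, key⟩ <;>
    rw [key] <;>
    · ext i j
      fin_cases i <;> fin_cases j <;>
        simp [depol, PX, PY, PZ, Matrix.trace_fin_two, Matrix.one_apply] <;>
        norm_num
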